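/- arXiv:1803.06479 — 2 statements merged into one kernel-verified Lean document; each statement's English description precedes it below -/
import Mathlib

section
/- Let Δ be the coproduct on the polynomial algebra 𝓕 over rooted labelled trees defined by Δτ = Σ_{s ∈ Sub(τ)} (τ\s) ⊗ s, extended multiplicatively. Then Δ is coassociative: (Δ ⊗ Id)∘Δ = (Id ⊗ Δ)∘Δ. -/
open scoped TensorProduct

/-- Rooted trees with labels in `{1,…,ℓ}`. -/
inductive LTree (ℓ : ℕ) : Type where
  | node (label : Fin ℓ) (children : List (LTree ℓ)) : LTree ℓ

namespace LTree

/-- All ways of choosing, for each child, one pair (pruned forest, chosen subtrees),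
concatenating the results: the Cartesian product of the lists of choices. -/
def combine {ℓ : ℕ} :
    List (List (List (LTree ℓ) × List (LTree ℓ))) →
      List (List (LTree ℓ) × List (LTree ℓ))
  | [] => [([], [])]
  | l :: ls => (combine ls).flatMap fun q => l.map fun p => (p.1 ++ q.1, p.2 ++ q.2)

/-- The combinatorial subtree coproduct of a tree `τ`: the list of all pairs
`(τ\s, s)` where `s` runs over the rooted subtrees of `τ` sharing the root of `τ`
(including the empty subtree, first entry, and `τ` itself), recorded as pairs of
forests; the second forest has at most one tree. -/
def cop {ℓ : ℕ} : LTree ℓ → List (List (LTree ℓ) × List (LTree ℓ))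
  | node a ts =>
      ([node a ts], []) ::
        (combine (ts.attach.map fun t => cop t.1)).map fun p => (p.1, [node a p.2])
decreasing_by
  have := List.sizeOf_lt_of_mem t.2
  simp_wf
  omega

end LTree

/-- The polynomial algebra `𝓕` with indeterminates the rooted labelled trees. -/
abbrev TreeAlg (ℓ : ℕ) : Type := MvPolynomial (LTree ℓ) ℝ

/-- The monomial in `𝓕` associated with a forest (a list of trees). -/
noncomputable def forestMonomial {ℓ : ℕ} (f : List (LTree ℓ)) : TreeAlg ℓ :=
  (f.map MvPolynomial.X).prod

/-- `Δτ = Σ_{s ∈ Sub(τ)} (τ\s) ⊗ s` on the generator `τ`. -/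
noncomputable def copElem {ℓ : ℕ} (τ : LTree ℓ) : TreeAlg ℓ ⊗[ℝ] TreeAlg ℓ :=
  ((LTree.cop τ).map fun p => forestMonomial p.1 ⊗ₜ[ℝ] forestMonomial p.2).sum

/-- The coproduct `Δ : 𝓕 → 𝓕 ⊗ 𝓕`, the multiplicative (algebra-map) extension of
`Δτ = Σ_{s ∈ Sub(τ)} (τ\s) ⊗ s`. -/
noncomputable def treeCoproduct (ℓ : ℕ) : TreeAlg ℓ →ₐ[ℝ] TreeAlg ℓ ⊗[ℝ] TreeAlg ℓ :=
  MvPolynomial.aeval copElem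

/-!
A cut of a forest is a pair (pruned forest, chosen subforest); the cuts of a forest are the
concatenation products of the cuts of its trees, so `Δ (forestMonomial f)` is the sum of
`forestMonomial f' ⊗ forestMonomial s` over the cuts `(f', s)` of `f`.

Coassociativity is proved for lists of cuts, with the third tensor factor replaced by an arbitrary
function `ψ` of the chosen subforest: cutting the pruned part again (`recutPruned`) agrees with
cutting the chosen part again (`recutSubtree`). The freedom in `ψ` is what makes the induction go
through: it absorbs the concatenation with a fixed subforest, so the property is closed under
products of cut lists (hence passes from trees to forests), and it absorbs the grafting
`s ↦ node a s`, which is not a map on monomials. For a tree `node a ts`, every cut other than the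
trivial one is a cut of the forest `ts` with the root grafted back onto its chosen part, which
reduces the tree case to the forest `ts`.
-/

open scoped TensorProduct
open MvPolynomial

namespace List

variable {α β M : Type*} [AddCommMonoid M]

theorem sum_map_flatMap (l : List α) (g : α → List β) (F : β → M) :
    ((l.flatMap g).map F).sum = (l.map fun a => ((g a).map F).sum).sum := by
  simp [flatMap_def, sum_flatten, map_flatten, Function.comp_def]

theorem sum_map_sum_map (l₁ : List α) (l₂ : List β) (F : α → β → M) :
    (l₁.map fun a => (l₂.map fun b => F a b).sum).sum
      = (l₂.map fun b => (l₁.map fun a => F a b).sum).sum := by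
  simpa using Multiset.sum_map_sum_map (l₁ : Multiset α) (l₂ : Multiset β) (f := F)

theorem sum_map_tmul {R N : Type*} [CommSemiring R] [Module R M] [AddCommMonoid N] [Module R N]
    (l : List α) (f : α → M) (n : N) :
    (l.map f).sum ⊗ₜ[R] n = (l.map fun a => f a ⊗ₜ[R] n).sum := by
  induction l with
  | nil => simp
  | cons a l ih => simp [TensorProduct.add_tmul, ih]

theorem tmul_sum_map {R N : Type*} [CommSemiring R] [Module R M] [AddCommMonoid N] [Module R N]
    (l : List α) (f : α → N) (m : M) :
    m ⊗ₜ[R] (l.map f).sum = (l.map fun a => m ⊗ₜ[R] f a).sum := by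
  induction l with
  | nil => simp
  | cons a l ih => simp [TensorProduct.tmul_add, ih]

end List

namespace LTree

variable {ℓ : ℕ}

abbrev Cut (ℓ : ℕ) : Type := List (LTree ℓ) × List (LTree ℓ)

def cutProd (ps qs : List (Cut ℓ)) : List (Cut ℓ) :=
  qs.flatMap fun q => ps.map fun p => (p.1 ++ q.1, p.2 ++ q.2)

theorem one_cutProd (ps : List (Cut ℓ)) : cutProd [([], [])] ps = ps := by
  simp [cutProd]

theorem cutProd_one (ps : List (Cut ℓ)) : cutProd ps [([], [])] = ps := by
  simp [cutProd]

theorem cutProd_assoc (ps qs rs : List (Cut ℓ)) :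
    cutProd (cutProd ps qs) rs = cutProd ps (cutProd qs rs) := by
  simp [cutProd, List.flatMap_assoc, List.map_flatMap, List.flatMap_map, Function.comp_def]

theorem combine_append (xs ys : List (List (Cut ℓ))) :
    combine (xs ++ ys) = cutProd (combine xs) (combine ys) := by
  induction xs with
  | nil => exact (one_cutProd _).symm
  | cons x xs ih =>
    change cutProd x (combine (xs ++ ys)) = cutProd (cutProd x (combine xs)) (combine ys)
    rw [ih, cutProd_assoc]

def copForest (ts : List (LTree ℓ)) : List (Cut ℓ) :=
  combine (ts.map cop)

theorem copForest_nil : copForest ([] : List (LTree ℓ)) = [([], [])] := rfl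

theorem copForest_cons (t : LTree ℓ) (ts : List (LTree ℓ)) :
    copForest (t :: ts) = cutProd (cop t) (copForest ts) := rfl

theorem copForest_singleton (t : LTree ℓ) : copForest [t] = cop t :=
  cutProd_one (cop t)

theorem copForest_append (ts us : List (LTree ℓ)) :
    copForest (ts ++ us) = cutProd (copForest ts) (copForest us) := by
  rw [copForest, List.map_append, combine_append]; rfl

theorem cop_node (a : Fin ℓ) (ts : List (LTree ℓ)) :
    cop (node a ts) = ([node a ts], []) :: (copForest ts).map fun p => (p.1, [node a p.2]) := by
  rw [cop, copForest, List.attach_map_val (l := ts) (f := cop)]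

end LTree

section Coassociativity

open LTree

variable {ℓ : ℕ}

@[simp] theorem forestMonomial_nil : forestMonomial ([] : List (LTree ℓ)) = 1 := rfl

@[simp] theorem forestMonomial_singleton (t : LTree ℓ) : forestMonomial [t] = X t := by
  simp [forestMonomial]

@[simp] theorem forestMonomial_append (ts us : List (LTree ℓ)) :
    forestMonomial (ts ++ us) = forestMonomial ts * forestMonomial us := by
  simp [forestMonomial]

theorem sum_map_cutProd {R : Type*} [Semiring R] (ps qs : List (Cut ℓ)) (F : Cut ℓ → R)
    (hF : ∀ p q, F (p.1 ++ q.1, p.2 ++ q.2) = F p * F q) :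
    ((cutProd ps qs).map F).sum = (ps.map F).sum * (qs.map F).sum := by
  simp only [cutProd, List.sum_map_flatMap, List.map_map, Function.comp_def, hF,
    List.sum_map_mul_right, List.sum_map_mul_left]

theorem treeCoproduct_X (τ : LTree ℓ) : treeCoproduct ℓ (X τ) = copElem τ :=
  aeval_X _ τ

theorem treeCoproduct_forestMonomial (ts : List (LTree ℓ)) :
    treeCoproduct ℓ (forestMonomial ts)
      = ((copForest ts).map fun p => forestMonomial p.1 ⊗ₜ[ℝ] forestMonomial p.2).sum := by
  induction ts with
  | nil => simp [copForest_nil, Algebra.TensorProduct.one_def]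
  | cons t ts ih =>
    rw [← List.singleton_append, forestMonomial_append, map_mul, ih, forestMonomial_singleton,
      treeCoproduct_X, List.singleton_append, copForest_cons, sum_map_cutProd _ _ _ fun p q => by
        simp only [forestMonomial_append, Algebra.TensorProduct.tmul_mul_tmul]]
    rfl

theorem copElem_node (a : Fin ℓ) (ts : List (LTree ℓ)) :
    copElem (node a ts) = X (node a ts) ⊗ₜ[ℝ] 1 +
      ((copForest ts).map fun p => forestMonomial p.1 ⊗ₜ[ℝ] X (node a p.2)).sum := by
  simp [copElem, cop_node, Function.comp_def]

noncomputable def recutPruned (ps : List (Cut ℓ)) (ψ : List (LTree ℓ) → TreeAlg ℓ) :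
    (TreeAlg ℓ ⊗[ℝ] TreeAlg ℓ) ⊗[ℝ] TreeAlg ℓ :=
  (ps.map fun p => treeCoproduct ℓ (forestMonomial p.1) ⊗ₜ[ℝ] ψ p.2).sum

noncomputable def recutSubtree (ps : List (Cut ℓ)) (ψ : List (LTree ℓ) → TreeAlg ℓ) :
    (TreeAlg ℓ ⊗[ℝ] TreeAlg ℓ) ⊗[ℝ] TreeAlg ℓ :=
  (ps.map fun p => ((copForest p.2).map fun q =>
    (forestMonomial p.1 ⊗ₜ[ℝ] forestMonomial q.1) ⊗ₜ[ℝ] ψ q.2).sum).sum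

def RecutsAgree (ps : List (Cut ℓ)) : Prop :=
  ∀ ψ, recutPruned ps ψ = recutSubtree ps ψ

theorem recutsAgree_one : RecutsAgree ([([], [])] : List (Cut ℓ)) := by
  intro ψ
  simp [recutPruned, recutSubtree, copForest_nil, Algebra.TensorProduct.one_def]

theorem RecutsAgree.cutProd {ps qs : List (Cut ℓ)} (hp : RecutsAgree ps) (hq : RecutsAgree qs) :
    RecutsAgree (LTree.cutProd ps qs) := by
  unfold RecutsAgree at hp hq
  intro ψ
  calc recutPruned (LTree.cutProd ps qs) ψ
      = (ps.map fun p => (treeCoproduct ℓ (forestMonomial p.1) ⊗ₜ[ℝ] 1) *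
          recutPruned qs fun s => ψ (p.2 ++ s)).sum := by
        rw [recutPruned, LTree.cutProd, List.sum_map_flatMap]
        simp only [List.map_map, Function.comp_def]
        rw [List.sum_map_sum_map]
        simp only [recutPruned,
          ← List.sum_map_mul_left (R := (TreeAlg ℓ ⊗[ℝ] TreeAlg ℓ) ⊗[ℝ] TreeAlg ℓ),
          forestMonomial_append, map_mul, Algebra.TensorProduct.tmul_mul_tmul, one_mul]
    _ = (ps.map fun p => (treeCoproduct ℓ (forestMonomial p.1) ⊗ₜ[ℝ] 1) *
          recutSubtree qs fun s => ψ (p.2 ++ s)).sum := by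
        simp only [hq]
    _ = (qs.map fun q => ((copForest q.2).map fun r =>
          (recutPruned ps fun s => ψ (s ++ r.2)) *
            ((forestMonomial q.1 ⊗ₜ[ℝ] forestMonomial r.1) ⊗ₜ[ℝ] 1)).sum).sum := by
        -- both sides are `∑ p, ∑ q, ∑ r, (Δ (M p.1) * (M q.1 ⊗ M r.1)) ⊗ ψ (p.2 ++ r.2)`
        simp only [recutPruned, recutSubtree,
          ← List.sum_map_mul_left (R := (TreeAlg ℓ ⊗[ℝ] TreeAlg ℓ) ⊗[ℝ] TreeAlg ℓ),
          ← List.sum_map_mul_right (R := (TreeAlg ℓ ⊗[ℝ] TreeAlg ℓ) ⊗[ℝ] TreeAlg ℓ),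
          Algebra.TensorProduct.tmul_mul_tmul, one_mul, mul_one]
        rw [List.sum_map_sum_map]
        refine congrArg List.sum (List.map_congr_left fun q _ => ?_)
        rw [List.sum_map_sum_map]
    _ = (qs.map fun q => ((copForest q.2).map fun r =>
          (recutSubtree ps fun s => ψ (s ++ r.2)) *
            ((forestMonomial q.1 ⊗ₜ[ℝ] forestMonomial r.1) ⊗ₜ[ℝ] 1)).sum).sum := by
        simp only [hp]
    _ = recutSubtree (LTree.cutProd ps qs) ψ := by
        rw [recutSubtree, LTree.cutProd, List.sum_map_flatMap]
        simp only [recutSubtree, List.map_map, Function.comp_def, copForest_append,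
          LTree.cutProd, List.sum_map_flatMap, forestMonomial_append,
          ← List.sum_map_mul_right (R := (TreeAlg ℓ ⊗[ℝ] TreeAlg ℓ) ⊗[ℝ] TreeAlg ℓ),
          Algebra.TensorProduct.tmul_mul_tmul, mul_one]
        refine congrArg List.sum (List.map_congr_left fun q _ => ?_)
        rw [List.sum_map_sum_map]

theorem recutsAgree_cop_node (a : Fin ℓ) {ts : List (LTree ℓ)} (h : RecutsAgree (copForest ts)) :
    RecutsAgree (cop (node a ts)) := by
  intro ψ
  have hPruned : recutPruned (cop (node a ts)) ψ = copElem (node a ts) ⊗ₜ[ℝ] ψ [] +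
      recutPruned (copForest ts) fun s => ψ [node a s] := by
    rw [recutPruned, recutPruned, cop_node]
    simp [Function.comp_def, treeCoproduct_X]
  have hSubtree : recutSubtree (cop (node a ts)) ψ = (X (node a ts) ⊗ₜ[ℝ] 1) ⊗ₜ[ℝ] ψ [] +
      (((copForest ts).map fun p => (forestMonomial p.1 ⊗ₜ[ℝ] X (node a p.2)) ⊗ₜ[ℝ] ψ []).sum +
        recutSubtree (copForest ts) fun s => ψ [node a s]) := by
    rw [recutSubtree, recutSubtree, cop_node]
    simp [copForest_nil, copForest_singleton, cop_node, Function.comp_def, List.sum_map_add]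
  rw [hPruned, hSubtree, h, copElem_node, TensorProduct.add_tmul, List.sum_map_tmul, add_assoc]

theorem recutsAgree_copForest {ts : List (LTree ℓ)} (h : ∀ t ∈ ts, RecutsAgree (cop t)) :
    RecutsAgree (copForest ts) := by
  induction ts with
  | nil => exact recutsAgree_one
  | cons t ts ih =>
    rw [copForest_cons]
    exact (h t List.mem_cons_self).cutProd (ih fun u hu => h u (List.mem_cons_of_mem t hu))

theorem recutsAgree_cop : ∀ τ : LTree ℓ, RecutsAgree (cop τ)
  | node a ts => recutsAgree_cop_node a (recutsAgree_copForest fun t _ => recutsAgree_cop t)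
decreasing_by
  have := List.sizeOf_lt_of_mem ‹t ∈ ts›
  simp_wf
  omega

theorem map_treeCoproduct_id_copElem (τ : LTree ℓ) :
    Algebra.TensorProduct.map (treeCoproduct ℓ) (AlgHom.id ℝ (TreeAlg ℓ)) (copElem τ)
      = recutPruned (cop τ) forestMonomial := by
  simp [copElem, recutPruned, map_list_sum, Function.comp_def]

theorem map_id_treeCoproduct_copElem (τ : LTree ℓ) :
    Algebra.TensorProduct.map (AlgHom.id ℝ (TreeAlg ℓ)) (treeCoproduct ℓ) (copElem τ)
      = Algebra.TensorProduct.assoc ℝ ℝ ℝ (TreeAlg ℓ) (TreeAlg ℓ) (TreeAlg ℓ)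
          (recutSubtree (cop τ) forestMonomial) := by
  simp [copElem, recutSubtree, map_list_sum, Function.comp_def, treeCoproduct_forestMonomial,
    List.tmul_sum_map]

end Coassociativity

/-- The subtree coproduct `Δ` on the polynomial algebra over rooted
labelled trees is coassociative: `(Δ ⊗ Id)∘Δ = (Id ⊗ Δ)∘Δ` (up to the canonical
associator of the tensor product). -/
theorem treeCoproduct_coassociative (ℓ : ℕ) (x : TreeAlg ℓ) :
    (Algebra.TensorProduct.assoc ℝ ℝ ℝ (TreeAlg ℓ) (TreeAlg ℓ) (TreeAlg ℓ))
        ((Algebra.TensorProduct.map (treeCoproduct ℓ) (AlgHom.id ℝ (TreeAlg ℓ)))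
          (treeCoproduct ℓ x))
      = (Algebra.TensorProduct.map (AlgHom.id ℝ (TreeAlg ℓ)) (treeCoproduct ℓ))
          (treeCoproduct ℓ x) := by
  suffices h : ((Algebra.TensorProduct.assoc ℝ ℝ ℝ _ _ _).toAlgHom.comp
      ((Algebra.TensorProduct.map (treeCoproduct ℓ) (AlgHom.id ℝ _)).comp (treeCoproduct ℓ)))
      = (Algebra.TensorProduct.map (AlgHom.id ℝ _) (treeCoproduct ℓ)).comp (treeCoproduct ℓ) from
    DFunLike.congr_fun h x
  refine MvPolynomial.algHom_ext fun τ => ?_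
  simp only [AlgHom.comp_apply, AlgEquiv.toAlgHom_apply, treeCoproduct_X,
    map_treeCoproduct_id_copElem, map_id_treeCoproduct_copElem, recutsAgree_cop τ forestMonomial]
end

section
/- For a smooth path h : [0,T] → ℝ^ℓ, the tree-indexed iterated integrals defined recursively by H^{•_a}_{ts} = h^a_t - h^a_s and H^{[τ₁⋯τ_n]_a}_{ts} = ∫_s^t Π_{i=1}^n H^{τ_i}_{us} dh^a_u satisfy the Chen-type relation H^τ_{ts} = Σ_{s' ∈ Sub(τ)} H^{τ\s'}_{us} H^{s'}_{tu} for all s ≤ u ≤ t, where H^{τ₁⋯τ_n} := Π H^{τ_i} for forests. -/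
/-- The tree-indexed iterated integrals of a path `h`:
`H^{•_a}_{ts} = h^a_t - h^a_s` and
`H^{[τ₁⋯τ_n]_a}_{ts} = ∫_s^t Π_i H^{τ_i}_{us} dh^a_u`. -/
noncomputable def Htree {ℓ : ℕ} (h : ℝ → Fin ℓ → ℝ) : LTree ℓ → ℝ → ℝ → ℝ
  | LTree.node a ts, s, t =>
      ∫ u in s..t,
        (ts.attach.map fun τ => Htree h τ.1 s u).prod * deriv (fun r => h r a) u
decreasing_by
  have := List.sizeOf_lt_of_mem τ.2
  simp_wf
  omega

/-- Iterated integrals indexed by forests: `H^{τ₁⋯τ_n} = Π_i H^{τ_i}`. -/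
noncomputable def Hforest {ℓ : ℕ} (h : ℝ → Fin ℓ → ℝ)
    (f : List (LTree ℓ)) (s t : ℝ) : ℝ :=
  (f.map fun τ => Htree h τ s t).prod

namespace ChenAux

variable {ℓ : ℕ} {h : ℝ → Fin ℓ → ℝ}

lemma htree_eq (a : Fin ℓ) (ts : List (LTree ℓ)) (s t : ℝ) :
    Htree h (LTree.node a ts) s t
      = ∫ u in s..t, (ts.map fun τ => Htree h τ s u).prod * deriv (fun r => h r a) u := by
  rw [Htree]
  simp [List.attach_map_val]

lemma deriv_cont (hh : ContDiff ℝ (⊤ : ℕ∞) h) (a : Fin ℓ) :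
    Continuous (deriv fun r => h r a) :=
  (contDiff_pi.mp hh a).continuous_deriv (by simp)

lemma htree_cont (hh : ContDiff ℝ (⊤ : ℕ∞) h) :
    ∀ (n : ℕ) (τ : LTree ℓ), sizeOf τ ≤ n → ∀ s, Continuous (Htree h τ s) := by
  intro n
  induction n with
  | zero => intro τ hle; obtain ⟨a, ts⟩ := τ; simp at hle
  | succ n ih =>
    intro τ hle s
    obtain ⟨a, ts⟩ := τ
    have hint : Continuous fun u =>
        (ts.map fun τ => Htree h τ s u).prod * deriv (fun r => h r a) u := by
      refine Continuous.mul ?_ (deriv_cont hh a)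
      exact continuous_list_prod ts fun τ hτ => by
        have := List.sizeOf_lt_of_mem hτ
        have : sizeOf τ ≤ n := by simp at hle; omega
        exact ih τ this s
    have : Htree h (LTree.node a ts) s = fun t =>
        ∫ u in s..t, (ts.map fun τ => Htree h τ s u).prod * deriv (fun r => h r a) u := by
      funext t; exact htree_eq a ts s t
    rw [this]
    exact intervalIntegral.continuous_primitive
      (fun _ _ => hint.intervalIntegrable _ _) s

lemma hforest_cont (hh : ContDiff ℝ (⊤ : ℕ∞) h) (f : List (LTree ℓ)) (s : ℝ) :
    Continuous (Hforest h f s) :=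
  continuous_list_prod f fun τ _ => htree_cont hh (sizeOf τ) τ le_rfl s

lemma hforest_nil (s t : ℝ) : Hforest h ([] : List (LTree ℓ)) s t = 1 := by
  simp [Hforest]

lemma hforest_singleton (τ : LTree ℓ) (s t : ℝ) :
    Hforest h [τ] s t = Htree h τ s t := by simp [Hforest]

lemma hforest_append (x y : List (LTree ℓ)) (s t : ℝ) :
    Hforest h (x ++ y) s t = Hforest h x s t * Hforest h y s t := by
  simp [Hforest]

/-- Interchange a list sum and an interval integral (for continuous summands). -/
lemma integral_list_sum {ι : Type*} (L : List ι) (f : ι → ℝ → ℝ)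
    (hf : ∀ i ∈ L, Continuous (f i)) (u t : ℝ) :
    (∫ r in u..t, (L.map fun i => f i r).sum)
      = (L.map fun i => ∫ r in u..t, f i r).sum := by
  induction L with
  | nil => simp
  | cons i L ih =>
    have hi : Continuous (f i) := hf i (by simp)
    have hL : Continuous fun r => (L.map fun j => f j r).sum := by
      have : (fun r => (L.map fun j => f j r).sum)
          = fun r => (L.map fun j => f j r).sum := rfl
      exact continuous_list_sum L fun j hj => hf j (List.mem_cons_of_mem _ hj)
    simp only [List.map_cons, List.sum_cons]
    rw [intervalIntegral.integral_add (hi.intervalIntegrable _ _)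
      (hL.intervalIntegrable _ _), ih (fun j hj => hf j (List.mem_cons_of_mem _ hj))]

/-- The key combinatorial identity for `combine`. -/
lemma sum_flatMap {α : Type*} (l : List α) (f : α → List ℝ) :
    (l.flatMap f).sum = (l.map fun a => (f a).sum).sum := by
  induction l with
  | nil => simp
  | cons a l ih => simp [List.flatMap_cons, ih]

lemma combine_sum (A B : List (LTree ℓ) → ℝ)
    (hA1 : A [] = 1) (hAm : ∀ x y, A (x ++ y) = A x * A y)
    (hB1 : B [] = 1) (hBm : ∀ x y, B (x ++ y) = B x * B y) :
    ∀ L : List (List (List (LTree ℓ) × List (LTree ℓ))),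
    ((LTree.combine L).map fun p => A p.1 * B p.2).sum
      = (L.map fun l => (l.map fun p => A p.1 * B p.2).sum).prod := by
  intro L
  induction L with
  | nil => simp [LTree.combine, hA1, hB1]
  | cons l ls ih =>
    rw [LTree.combine]
    simp only [List.map_cons, List.prod_cons, ← ih]
    rw [List.map_flatMap, sum_flatMap]
    have : ∀ q : List (LTree ℓ) × List (LTree ℓ),
        (((l.map fun p => (p.1 ++ q.1, p.2 ++ q.2)).map fun p => A p.1 * B p.2)).sum
          = (l.map fun p => A p.1 * B p.2).sum * (A q.1 * B q.2) := by
      intro q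
      rw [List.map_map, ← List.sum_map_mul_right]
      congr 1
      refine List.map_congr_left fun p _ => ?_
      simp only [Function.comp_apply, hAm, hBm]
      ring
    simp only [this]
    rw [List.sum_map_mul_left]

lemma chen_aux (hh : ContDiff ℝ (⊤ : ℕ∞) h) :
    ∀ (n : ℕ) (τ : LTree ℓ), sizeOf τ ≤ n → ∀ s u t : ℝ,
    Htree h τ s t
      = ((LTree.cop τ).map fun p => Hforest h p.1 s u * Hforest h p.2 u t).sum := by
  intro n
  induction n with
  | zero => intro τ hle; obtain ⟨a, ts⟩ := τ; simp at hle
  | succ n ih =>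
    intro τ hle s u t
    obtain ⟨a, ts⟩ := τ
    have hsize : ∀ τ' ∈ ts, sizeOf τ' ≤ n := by
      intro τ' hm
      have := List.sizeOf_lt_of_mem hm
      simp at hle; omega
    -- continuity facts
    set D := deriv fun r => h r a with hD
    have hDc : Continuous D := deriv_cont hh a
    have hGc : ∀ s' : ℝ, Continuous fun r =>
        (ts.map fun τ => Htree h τ s' r).prod * D r := fun s' =>
      (continuous_list_prod ts fun τ hτ => htree_cont hh n τ (hsize τ hτ) s').mul hDc
    -- split the integral
    have hsplit : Htree h (LTree.node a ts) s t
        = Htree h (LTree.node a ts) s u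
          + ∫ r in u..t, (ts.map fun τ => Htree h τ s r).prod * D r := by
      rw [htree_eq, htree_eq,
        ← intervalIntegral.integral_add_adjacent_intervals
          ((hGc s).intervalIntegrable s u) ((hGc s).intervalIntegrable u t)]
    -- rewrite the integrand over [u, t] using the induction hypothesis
    have hintegrand : ∀ r : ℝ,
        (ts.map fun τ => Htree h τ s r).prod * D r
          = ((LTree.combine (ts.map LTree.cop)).map fun q =>
              Hforest h q.1 s u * (Hforest h q.2 u r * D r)).sum := by
      intro r
      have h1 : ∀ τ' ∈ ts, Htree h τ' s r
          = ((LTree.cop τ').map fun p => Hforest h p.1 s u * Hforest h p.2 u r).sum :=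
        fun τ' hm => ih τ' (hsize τ' hm) s u r
      have h2 : (ts.map fun τ => Htree h τ s r).prod
          = ((LTree.combine (ts.map LTree.cop)).map fun q =>
              Hforest h q.1 s u * Hforest h q.2 u r).sum := by
        rw [combine_sum (fun f => Hforest h f s u) (fun f => Hforest h f u r)
          (hforest_nil _ _) (fun x y => hforest_append x y _ _)
          (hforest_nil _ _) (fun x y => hforest_append x y _ _)]
        rw [List.map_map]
        congr 1
        exact List.map_congr_left fun τ' hm => by
          simpa [Function.comp] using h1 τ' hm
      rw [h2, ← List.sum_map_mul_right]
      simp only [mul_assoc]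
    -- compute the integral over [u, t]
    have hmain : (∫ r in u..t, (ts.map fun τ => Htree h τ s r).prod * D r)
        = ((LTree.combine (ts.map LTree.cop)).map fun q =>
            Hforest h q.1 s u * Htree h (LTree.node a q.2) u t).sum := by
      have := integral_list_sum (LTree.combine (ts.map LTree.cop))
        (fun q r => Hforest h q.1 s u * (Hforest h q.2 u r * D r))
        (fun q _ => continuous_const.mul ((hforest_cont hh q.2 u).mul hDc)) u t
      calc (∫ r in u..t, (ts.map fun τ => Htree h τ s r).prod * D r)
          = ∫ r in u..t, ((LTree.combine (ts.map LTree.cop)).map fun q =>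
              Hforest h q.1 s u * (Hforest h q.2 u r * D r)).sum := by
            simp only [hintegrand]
        _ = ((LTree.combine (ts.map LTree.cop)).map fun q =>
              ∫ r in u..t, Hforest h q.1 s u * (Hforest h q.2 u r * D r)).sum := this
        _ = _ := by
            congr 1
            refine List.map_congr_left fun q _ => ?_
            rw [intervalIntegral.integral_const_mul, htree_eq]
            simp [Hforest, hD]
    -- assemble
    rw [hsplit, hmain, LTree.cop]
    have hattach : (ts.attach.map fun t => LTree.cop t.1) = ts.map LTree.cop := by
      simp [List.attach_map_val]
    rw [hattach]
    simp only [List.map_cons, List.sum_cons, List.map_map, hforest_singleton,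
      hforest_nil, mul_one]
    congr 1
    refine congrArg List.sum (List.map_congr_left fun q _ => ?_)
    simp [Function.comp, hforest_singleton]

end ChenAux

/-- For a smooth path `h : [0,T] → ℝ^ℓ` the tree-indexed iterated
integrals satisfy the Chen-type relation
`H^τ_{ts} = Σ_{s' ∈ Sub(τ)} H^{τ\s'}_{us} H^{s'}_{tu}` for `s ≤ u ≤ t`. -/
theorem tree_chen_relation {ℓ : ℕ} (T : ℝ)
    (h : ℝ → Fin ℓ → ℝ) (hh : ContDiff ℝ (⊤ : ℕ∞) h)
    (τ : LTree ℓ) (s u t : ℝ)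
    (hs : 0 ≤ s) (hsu : s ≤ u) (hut : u ≤ t) (ht : t ≤ T) :
    Htree h τ s t
      = ((LTree.cop τ).map fun p => Hforest h p.1 s u * Hforest h p.2 u t).sum :=
  ChenAux.chen_aux hh (sizeOf τ) τ le_rfl s u t
end
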